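/- arXiv:2505.16759 — 4 statements merged into one kernel-verified Lean document; each statement's English description precedes it below -/
import Mathlib

section
/- Let B be a unital C*-algebra and A ⊆ B a closed unital *-subalgebra, and suppose that both A and B are simple (i.e. every closed two-sided ideal of each is {0} or the whole algebra). Then the inclusion A ⊆ B is hereditarily essential if and only if it is C*-irreducible. -/
/-- For a unital inclusion `A ⊆ B` of simple C*-algebras (simplicity meaning every
closed two-sided ideal is trivial), the inclusion is hereditarily essential
(every nonzero closed two-sided ideal of any intermediate C*-algebra meets `A`
nontrivially) if and only if it is C*-irreducible (every intermediate C*-algebra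
is simple). -/
theorem hereditarilyEssential_iff_cstarIrreducible
    {B : Type*} [NormedRing B] [StarRing B] [CStarRing B]
    [NormedAlgebra ℂ B] [StarModule ℂ B] [CompleteSpace B]
    (A : StarSubalgebra ℂ B) (hA : IsClosed (A : Set B))
    (hAsimple : ∀ I : TwoSidedIdeal A, IsClosed (I : Set A) → I = ⊥ ∨ I = ⊤)
    (hBsimple : ∀ I : TwoSidedIdeal B, IsClosed (I : Set B) → I = ⊥ ∨ I = ⊤) :
    (∀ C : StarSubalgebra ℂ B, IsClosed (C : Set B) → A ≤ C →
        ∀ I : TwoSidedIdeal C, IsClosed (I : Set C) → I ≠ ⊥ →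
          ∃ x : C, x ∈ I ∧ (x : B) ∈ A ∧ x ≠ 0) ↔
      (∀ C : StarSubalgebra ℂ B, IsClosed (C : Set B) → A ≤ C →
        ∀ I : TwoSidedIdeal C, IsClosed (I : Set C) → I = ⊥ ∨ I = ⊤) := by
  constructor
  · intro h C hC hAC I hI
    by_cases hbot : I = ⊥
    · exact Or.inl hbot
    · right
      obtain ⟨x, hxI, hxA, hx0⟩ := h C hC hAC I hI hbot
      -- pull back I to an ideal of A via the inclusion
      set f : A →⋆ₐ[ℂ] C := StarSubalgebra.inclusion hAC with hf
      have fcont : Continuous f := by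
        apply Continuous.subtype_mk
        exact continuous_subtype_val
      set J : TwoSidedIdeal A := TwoSidedIdeal.comap (f : A →+* C) I with hJ
      have hJclosed : IsClosed (J : Set A) := by
        have : (J : Set A) = f ⁻¹' (I : Set C) := rfl
        rw [this]
        exact hI.preimage fcont
      have hJne : J ≠ ⊥ := by
        intro hb
        apply hx0
        have hmem : (⟨(x : B), hxA⟩ : A) ∈ J := by
          rw [hJ, TwoSidedIdeal.mem_comap]
          have : ((f : A →+* C) ⟨(x : B), hxA⟩) = x := Subtype.ext rfl
          rw [this]; exact hxI
        rw [hb, TwoSidedIdeal.mem_bot] at hmem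
        have : (x : B) = 0 := congrArg Subtype.val hmem
        exact Subtype.ext this
      have hJtop : J = ⊤ := (hAsimple J hJclosed).resolve_left hJne
      have h1 : (1 : C) ∈ I := by
        have : (1 : A) ∈ J := hJtop ▸ TwoSidedIdeal.mem_top _
        rw [hJ, TwoSidedIdeal.mem_comap] at this
        simpa using this
      refine TwoSidedIdeal.ext fun y => ⟨fun _ => TwoSidedIdeal.mem_top _, fun _ => ?_⟩
      simpa using I.mul_mem_left y 1 h1
  · intro h C hC hAC I hI hbot
    have htop : I = ⊤ := (h C hC hAC I hI).resolve_left hbot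
    refine ⟨1, htop ▸ TwoSidedIdeal.mem_top _, by simpa using A.one_mem, ?_⟩
    intro h10
    apply hbot
    refine TwoSidedIdeal.ext fun y => ?_
    rw [TwoSidedIdeal.mem_bot]
    constructor
    · intro _
      calc y = y * 1 := (mul_one y).symm
        _ = y * 0 := by rw [h10]
        _ = 0 := mul_zero y
    · rintro rfl; exact I.zero_mem
end

section
/- For every natural number k, U S₁^k S₂ = S₂^k S₁. -/
/-- With `S₁ := U * S₂` in the dyadic C*-algebra relations, for every natural
number `k` one has `U S₁^k S₂ = S₂^k S₁`. -/
theorem U_S1_pow_S2_eq_S2_pow_S1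
    {B : Type*} [NormedRing B] [StarRing B] [CStarRing B]
    [NormedAlgebra ℂ B] [StarModule ℂ B] [CompleteSpace B]
    (U S₂ : B) (hU₁ : star U * U = 1) (hU₂ : U * star U = 1)
    (hS₂ : star S₂ * S₂ = 1)
    (hUS : U ^ 2 * S₂ = S₂ * U)
    (hsum : S₂ * star S₂ + U * (S₂ * star S₂) * star U = 1) :
    ∀ k : ℕ, U * (U * S₂) ^ k * S₂ = S₂ ^ k * (U * S₂) := by
  intro k
  induction k with
  | zero => simp
  | succ n ih =>
    have h1 : U * (U * S₂) ^ (n + 1) * S₂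
        = (U ^ 2 * S₂) * ((U * S₂) ^ n * S₂) := by
      rw [pow_succ' (U * S₂) n, pow_two]; noncomm_ring
    rw [h1, hUS, pow_succ' S₂ n, mul_assoc, mul_assoc, ← mul_assoc U, ih]
end

section
/- For every natural number k, U p_k = S₂^k S₁ S₂* (S₁*)^k; in particular U p_k lies in the *-subalgebra generated by S₁ and S₂. -/
/-- With `S₁ := U * S₂` and `p_k := S₁^k S₂ S₂* (S₁*)^k`, for every `k` one has
`U p_k = S₂^k S₁ S₂* (S₁*)^k`; in particular `U p_k` lies in the *-subalgebra of `B`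
generated by `S₁` and `S₂`. -/
theorem U_pk_in_star_subalgebra
    {B : Type*} [NormedRing B] [StarRing B] [CStarRing B]
    [NormedAlgebra ℂ B] [StarModule ℂ B] [CompleteSpace B]
    (U S₂ : B) (hU₁ : star U * U = 1) (hU₂ : U * star U = 1)
    (hS₂ : star S₂ * S₂ = 1)
    (hUS : U ^ 2 * S₂ = S₂ * U)
    (hsum : S₂ * star S₂ + U * (S₂ * star S₂) * star U = 1)
    (S₁ : B) (hS₁ : S₁ = U * S₂)
    (p : ℕ → B) (hp : ∀ k, p k = S₁ ^ k * (S₂ * star S₂) * (star S₁) ^ k) :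
    ∀ k : ℕ,
      U * p k = S₂ ^ k * S₁ * star S₂ * (star S₁) ^ k ∧
        U * p k ∈ StarAlgebra.adjoin ℂ ({S₁, S₂} : Set B) := by
  have hUS₁ : U * S₁ = S₂ * U := by
    rw [hS₁, ← mul_assoc, ← sq, hUS]
  have key : ∀ k : ℕ, U * S₁ ^ k = S₂ ^ k * U := by
    intro k
    induction k with
    | zero => simp
    | succ n ih =>
      rw [pow_succ', pow_succ', ← mul_assoc, hUS₁, mul_assoc, ih, ← mul_assoc]
  intro k
  have heq : U * p k = S₂ ^ k * S₁ * star S₂ * (star S₁) ^ k := by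
    rw [hp, ← mul_assoc, ← mul_assoc, key, hS₁]
    noncomm_ring
  refine ⟨heq, heq ▸ ?_⟩
  have h1 : S₁ ∈ StarAlgebra.adjoin ℂ ({S₁, S₂} : Set B) :=
    StarAlgebra.subset_adjoin ℂ _ (by simp)
  have h2 : S₂ ∈ StarAlgebra.adjoin ℂ ({S₁, S₂} : Set B) :=
    StarAlgebra.subset_adjoin ℂ _ (by simp)
  exact mul_mem (mul_mem (mul_mem (pow_mem h2 k) h1) (star_mem h2)) (pow_mem (star_mem h1) k)
end

section
/- The series ∑_{k=0}^∞ p_k converges in the strong operator topology to the orthogonal projection onto the closed linear span of {e_n : n ∈ ℤ, n ≠ −1}; equivalently, for every f ∈ ℓ²(ℤ), the partial sums ∑_{k=0}^{N} p_k f converge in norm, as N → ∞, to f − f(−1)·e_{−1}. -/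
/-!
`p k` is the coordinate projection onto `{m : v₂(m + 1) = k}`: with `V = S₁ ^ k * S₂` we have
`p k = V * V†`, and `V` maps `e n` to `e (2 ^ k * (2 * n + 1) - 1)`, an injective relabelling of
the basis onto exactly these indices. So the `N`-th partial sum is the projection onto
`{m : ¬ 2 ^ (N + 1) ∣ m + 1}`, and its difference with the limit is `-f` restricted to
`{m ≠ -1 : 2 ^ (N + 1) ∣ m + 1}`. These coordinates are dominated by those of `f` and each is
eventually `0`, so the difference tends to `0` in `ℓ²` (dominated convergence for sums).
-/

noncomputable section

open Filter

/-- `ℓ²(ℤ)` with complex coefficients. -/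
abbrev H : Type := lp (fun _ : ℤ => ℂ) 2

/-- The standard orthonormal basis vectors `e n` of `ℓ²(ℤ)`. -/
def e (n : ℤ) : H := lp.single 2 n 1

open scoped ENNReal

theorem FiniteMultiplicity.eventually_not_pow_dvd {α : Type*} [Monoid α] {a b : α}
    (h : FiniteMultiplicity a b) : ∀ᶠ N in atTop, ¬ a ^ N ∣ b := by
  obtain ⟨n, hn⟩ := h
  exact eventually_atTop.mpr ⟨n + 1, fun N hN hdvd => hn ((pow_dvd_pow a hN).trans hdvd)⟩

theorem Int.exists_two_pow_mul_odd_eq_iff {k : ℕ} {a : ℤ} :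
    (∃ n, 2 ^ k * (2 * n + 1) = a) ↔ 2 ^ k ∣ a ∧ ¬ 2 ^ (k + 1) ∣ a := by
  have h2k : (2 : ℤ) ^ k ≠ 0 := pow_ne_zero k two_ne_zero
  constructor
  · rintro ⟨n, rfl⟩
    refine ⟨dvd_mul_right _ _, fun hdvd => ?_⟩
    rw [pow_succ, mul_dvd_mul_iff_left h2k] at hdvd
    omega
  · rintro ⟨⟨c, rfl⟩, hodd⟩
    rw [pow_succ, mul_dvd_mul_iff_left h2k] at hodd
    exact ⟨c / 2, by congr 1; omega⟩

theorem Finset.sum_range_ite_and_not_succ {M : Type*} [AddCommMonoid M] {P : ℕ → Prop}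
    [DecidablePred P] (h0 : P 0) (hP : ∀ k, P (k + 1) → P k) (c : M) (N : ℕ) :
    ∑ k ∈ Finset.range N, (if P k ∧ ¬ P (k + 1) then c else 0) = if P N then 0 else c := by
  induction N with
  | zero => simp [h0]
  | succ N ih =>
    rw [Finset.sum_range_succ, ih]
    by_cases hN : P (N + 1)
    · simp [hN, hP N hN]
    · by_cases hN' : P N <;> simp [hN, hN']

namespace lp

section Dominated

variable {ι : Type*} {E : ι → Type*} [∀ i, NormedAddCommGroup (E i)] {p : ℝ≥0∞} [Fact (1 ≤ p)]

theorem tendsto_zero_of_norm_le_of_eventually_eq_zero {α : Type*} {l : Filter α} (hp : p ≠ ∞)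
    {f : lp E p} {g : α → lp E p} (hle : ∀ a i, ‖g a i‖ ≤ ‖f i‖)
    (hzero : ∀ i, ∀ᶠ a in l, g a i = 0) : Tendsto g l (nhds 0) := by
  classical
  refine Metric.tendsto_nhds.mpr fun ε hε => ?_
  obtain ⟨s, hs⟩ := Metric.tendsto_atTop.mp (lp.hasSum_single hp f) ε hε
  have htail : ‖f - ∑ i ∈ s, lp.single p i (f i)‖ < ε := by
    rw [← dist_eq_norm']
    exact hs s le_rfl
  have hp0 : p ≠ 0 := (zero_lt_one.trans_le Fact.out).ne'
  filter_upwards [s.eventually_all.mpr fun i _ => hzero i] with a ha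
  rw [dist_zero_right]
  refine lt_of_le_of_lt (norm_mono hp0 fun i => ?_) htail
  by_cases hi : i ∈ s
  · simp [ha i hi]
  · have hsum : (∑ j ∈ s, lp.single p j (f j)) i = 0 := by
      rw [lp.coeFn_sum, Finset.sum_apply]
      exact Finset.sum_eq_zero fun j hj =>
        lp.single_apply_ne p j _ (ne_of_mem_of_not_mem hj hi).symm
    rw [lp.coeFn_sub, Pi.sub_apply, hsum, sub_zero]
    exact hle a i

end Dominated

section BasisMap

variable {𝕜 ι κ : Type*} [RCLike 𝕜] [DecidableEq ι] [DecidableEq κ]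

theorem inner_single_one_left (i : ι) (f : lp (fun _ : ι => 𝕜) 2) :
    inner 𝕜 (lp.single 2 i (1 : 𝕜)) f = f i := by
  simp [lp.inner_single_left]

variable {T : lp (fun _ : ι => 𝕜) 2 →L[𝕜] lp (fun _ : κ => 𝕜) 2} {σ : ι → κ}

theorem adjoint_apply_of_map_single (hT : ∀ i, T (lp.single 2 i 1) = lp.single 2 (σ i) 1)
    (g : lp (fun _ : κ => 𝕜) 2) (i : ι) : T.adjoint g i = g (σ i) := by
  rw [← inner_single_one_left, ContinuousLinearMap.adjoint_inner_right, hT, inner_single_one_left]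

theorem apply_of_map_single (hT : ∀ i, T (lp.single 2 i 1) = lp.single 2 (σ i) 1)
    (hσ : σ.Injective) (f : lp (fun _ : ι => 𝕜) 2) (i : ι) : T f (σ i) = f i := by
  have hadj : T.adjoint (lp.single 2 (σ i) 1) = lp.single 2 i 1 := by
    ext j
    simp only [adjoint_apply_of_map_single hT, lp.single_apply, Pi.single_apply, hσ.eq_iff]
  rw [← inner_single_one_left, ← ContinuousLinearMap.adjoint_inner_left, hadj,
    inner_single_one_left]

theorem apply_eq_zero_of_map_single (hT : ∀ i, T (lp.single 2 i 1) = lp.single 2 (σ i) 1)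
    (f : lp (fun _ : ι => 𝕜) 2) {k : κ} (hk : k ∉ Set.range σ) : T f k = 0 := by
  have hadj : T.adjoint (lp.single 2 k 1) = 0 := by
    ext j
    simp only [adjoint_apply_of_map_single hT, lp.single_apply, lp.coeFn_zero, Pi.zero_apply]
    exact Pi.single_eq_of_ne (fun h => hk ⟨j, h⟩) _
  rw [← inner_single_one_left, ← ContinuousLinearMap.adjoint_inner_left, hadj, inner_zero_left]

end BasisMap

end lp

theorem e_apply (n m : ℤ) : e n m = if m = n then 1 else 0 := by
  simp [e, lp.single_apply, Pi.single_apply]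

theorem apply_e_eq_e_two_mul {S : H →L[ℂ] H}
    (hS : ∀ (f : H) (n : ℤ), S f n = if Even n then f (n / 2) else 0) (n : ℤ) :
    S (e n) = e (2 * n) := by
  ext m
  rw [hS, e_apply, e_apply]
  by_cases hm : Even m
  · obtain ⟨r, rfl⟩ := hm
    simp only [← two_mul, Int.mul_ediv_cancel_left _ two_ne_zero, if_pos (even_two_mul r)]
    grind
  · rw [if_neg hm, if_neg]
    rintro rfl
    exact hm (even_two_mul n)

theorem pow_apply_e_eq_e {A : H →L[ℂ] H} (hA : ∀ n, A (e n) = e (2 * n + 1)) (k : ℕ) (n : ℤ) :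
    (A ^ k) (e n) = e (2 ^ k * (n + 1) - 1) := by
  induction k with
  | zero => simp
  | succ k ih =>
    rw [pow_succ', mul_apply_eq_comp, ih, hA]
    congr 1
    ring

theorem mul_adjoint_apply_of_map_e {V : H →L[ℂ] H} {k : ℕ}
    (hV : ∀ n, V (e n) = e (2 ^ k * (2 * n + 1) - 1)) (f : H) (m : ℤ) :
    (V * V.adjoint) f m = if 2 ^ k ∣ m + 1 ∧ ¬ 2 ^ (k + 1) ∣ m + 1 then f m else 0 := by
  have hinj : (fun n : ℤ => 2 ^ k * (2 * n + 1) - 1).Injective := fun a b hab => by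
    have := mul_left_cancel₀ (pow_ne_zero k (two_ne_zero (α := ℤ))) (sub_left_inj.mp hab)
    omega
  rw [mul_apply_eq_comp]
  split_ifs with hm
  · obtain ⟨n, hn⟩ := Int.exists_two_pow_mul_odd_eq_iff.mpr hm
    obtain rfl : 2 ^ k * (2 * n + 1) - 1 = m := by linarith
    rw [lp.apply_of_map_single hV hinj, lp.adjoint_apply_of_map_single hV]
  · refine lp.apply_eq_zero_of_map_single hV _ fun ⟨n, hn⟩ => hm ?_
    exact Int.exists_two_pow_mul_odd_eq_iff.mp ⟨n, by beta_reduce at hn; linarith⟩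

theorem sum_range_mul_adjoint_apply {V : ℕ → H →L[ℂ] H}
    (hV : ∀ k n, V k (e n) = e (2 ^ k * (2 * n + 1) - 1)) (f : H) (N : ℕ) (m : ℤ) :
    (∑ k ∈ Finset.range (N + 1), (V k * (V k).adjoint) f) m =
      if 2 ^ (N + 1) ∣ m + 1 then 0 else f m := by
  simp only [lp.coeFn_sum, Finset.sum_apply, mul_adjoint_apply_of_map_e (hV _)]
  exact Finset.sum_range_ite_and_not_succ (by simp) (fun k => (pow_dvd_pow 2 k.le_succ).trans) _ _

theorem tendsto_of_apply_eq_ite_two_pow_dvd {f : H} {g : ℕ → H}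
    (hg : ∀ N m, g N m = if 2 ^ (N + 1) ∣ m + 1 then 0 else f m) :
    Tendsto g atTop (nhds (f - f (-1) • e (-1))) := by
  have hdiff (N : ℕ) (m : ℤ) :
      (g N - (f - f (-1) • e (-1))) m = if 2 ^ (N + 1) ∣ m + 1 ∧ m ≠ -1 then -f m else 0 := by
    rw [lp.coeFn_sub, Pi.sub_apply, hg, lp.coeFn_sub, Pi.sub_apply, lp.coeFn_smul,
      Pi.smul_apply, e_apply, smul_eq_mul]
    by_cases hm : m = -1
    · subst hm
      simp
    · split_ifs <;> simp_all
  rw [← tendsto_sub_nhds_zero_iff]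
  refine lp.tendsto_zero_of_norm_le_of_eventually_eq_zero ENNReal.ofNat_ne_top (f := f)
    (fun N m => ?_) (fun m => ?_)
  · rw [hdiff]
    split_ifs <;> simp
  · by_cases hm : m = -1
    · simp [hdiff, hm]
    · have hfin : FiniteMultiplicity (2 : ℤ) (m + 1) :=
        Int.finiteMultiplicity_iff.mpr ⟨by norm_num, by omega⟩
      filter_upwards [(tendsto_add_atTop_nat 1).eventually hfin.eventually_not_pow_dvd]
        with N hN
      simp [hdiff, hN]

/-- The series `∑ₖ p_k` converges in the strong operator topology to the orthogonal
projection onto the closed linear span of `{e_n : n ≠ −1}`: for every `f ∈ ℓ²(ℤ)` the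
partial sums `∑_{k=0}^{N} p_k f` converge in norm to `f − f(−1)·e_{−1}`. -/
theorem sum_pk_converges_strongly
    (U S₂ : H →L[ℂ] H)
    (hU : ∀ n : ℤ, U (e n) = e (n + 1))
    (hS₂ : ∀ (f : H) (n : ℤ), S₂ f n = if Even n then f (n / 2) else 0)
    (p : ℕ → H →L[ℂ] H)
    (hp : ∀ k : ℕ, p k = (U * S₂) ^ k * (S₂ * ContinuousLinearMap.adjoint S₂) *
      (ContinuousLinearMap.adjoint (U * S₂)) ^ k) :
    ∀ f : H,
      Tendsto (fun N : ℕ => ∑ k ∈ Finset.range (N + 1), p k f) atTop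
        (nhds (f - f (-1) • e (-1))) := by
  intro f
  have hS₁ (n : ℤ) : (U * S₂) (e n) = e (2 * n + 1) := by
    rw [mul_apply_eq_comp, apply_e_eq_e_two_mul hS₂, hU]
  have hV (k : ℕ) (n : ℤ) : ((U * S₂) ^ k * S₂) (e n) = e (2 ^ k * (2 * n + 1) - 1) := by
    rw [mul_apply_eq_comp, apply_e_eq_e_two_mul hS₂, pow_apply_e_eq_e hS₁]
  have hpk (k : ℕ) : p k = ((U * S₂) ^ k * S₂) * ((U * S₂) ^ k * S₂).adjoint := by
    simp only [hp k, ← ContinuousLinearMap.star_eq_adjoint, star_mul, star_pow, mul_assoc]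
  refine tendsto_of_apply_eq_ite_two_pow_dvd fun N m => ?_
  simp only [hpk]
  exact sum_range_mul_adjoint_apply hV f N m
end
end
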